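/- Let h_{αij} be real numbers indexed by α ∈ {5,6,7} and i, j ∈ {1,2,3,4}, symmetric in the last two indices (h_{αij} = h_{αji}), and satisfying for every i ∈ {1,2,3,4}: h_{52i} + h_{63i} + h_{74i} = 0, h_{51i} − h_{64i} + h_{73i} = 0, h_{54i} + h_{61i} − h_{72i} = 0, and −h_{53i} + h_{62i} + h_{71i} = 0. Then ∑_{α=5}^{7} [ (h_{α14} + h_{α23})² + (h_{α13} − h_{α24})² − (h_{α11} + h_{α22})(h_{α33} + h_{α44}) ] = ∑_{i=1}^{4} ∑_{j=1}^{4} (h_{5ij})². -/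
import Mathlib

/-- vanishing of expression (A.5) in Appendix A.2 of the paper. With
`h_{αij}` the components of the second fundamental form of a coassociative submanifold
(`α ∈ {5,6,7}` encoded as `Fin 3` via `α ↦ α − 5`, and `i, j ∈ {1,2,3,4}` as `Fin 4` via
`i ↦ i − 1`), symmetric in `i, j` and satisfying the relations (A.4), one has
`∑_α [(h_{α14}+h_{α23})² + (h_{α13}−h_{α24})² − (h_{α11}+h_{α22})(h_{α33}+h_{α44})]
  = ∑_{i,j} h_{5ij}²`. -/
theorem statement_10 (h : Fin 3 → Fin 4 → Fin 4 → ℝ)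
    (hsymm : ∀ α i j, h α i j = h α j i)
    (hrel1 : ∀ i, h 0 1 i + h 1 2 i + h 2 3 i = 0)
    (hrel2 : ∀ i, h 0 0 i - h 1 3 i + h 2 2 i = 0)
    (hrel3 : ∀ i, h 0 3 i + h 1 0 i - h 2 1 i = 0)
    (hrel4 : ∀ i, -h 0 2 i + h 1 1 i + h 2 0 i = 0) :
    ∑ α, ((h α 0 3 + h α 1 2) ^ 2 + (h α 0 2 - h α 1 3) ^ 2 -
        (h α 0 0 + h α 1 1) * (h α 2 2 + h α 3 3))
      = ∑ i, ∑ j, h 0 i j ^ 2 := by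
  have e10 : ∀ j, h 1 0 j = h 2 1 j - h 0 3 j := fun j => by linarith [hrel3 j]
  have e11 : ∀ j, h 1 1 j = h 0 2 j - h 2 0 j := fun j => by linarith [hrel4 j]
  have e12 : ∀ j, h 1 2 j = -h 0 1 j - h 2 3 j := fun j => by linarith [hrel1 j]
  have e13 : ∀ j, h 1 3 j = h 0 0 j + h 2 2 j := fun j => by linarith [hrel2 j]
  have S01 : -h 0 0 2 - h 0 1 3 + h 2 0 0 + h 2 1 1 = 0 := by
    have := hsymm 1 0 1
    rw [e10 1, e11 0] at this
    linarith [hsymm 0 3 1, hsymm 0 2 0, hsymm 2 1 1, hsymm 2 0 0]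
  have S02 : h 0 0 1 - h 0 2 3 + h 2 0 3 + h 2 1 2 = 0 := by
    have := hsymm 1 0 2
    rw [e10 2, e12 0] at this
    linarith [hsymm 0 3 2, hsymm 0 1 0, hsymm 2 3 0]
  have S03 : -h 0 0 0 - h 0 3 3 - h 2 0 2 + h 2 1 3 = 0 := by
    have := hsymm 1 0 3
    rw [e10 3, e13 0] at this
    linarith [hsymm 0 3 3, hsymm 2 2 0]
  have S12 : h 0 1 1 + h 0 2 2 - h 2 0 2 + h 2 1 3 = 0 := by
    have := hsymm 1 1 2
    rw [e11 2, e12 1] at this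
    linarith [hsymm 0 1 1, hsymm 2 3 1, hsymm 2 0 2]
  have S13 : -h 0 0 1 + h 0 2 3 - h 2 0 3 - h 2 1 2 = 0 := by
    have := hsymm 1 1 3
    rw [e11 3, e13 1] at this
    linarith [hsymm 0 0 1, hsymm 2 0 3, hsymm 2 2 1]
  have S23 : -h 0 0 2 - h 0 1 3 - h 2 2 2 - h 2 3 3 = 0 := by
    have := hsymm 1 2 3
    rw [e12 3, e13 2] at this
    linarith [hsymm 0 1 3, hsymm 0 0 2, hsymm 2 3 3]
  simp only [Fin.sum_univ_three, Fin.sum_univ_four]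
  simp only [e10, e11, e12, e13]
  simp only [hsymm 0 1 0, hsymm 0 2 0, hsymm 0 3 0, hsymm 0 2 1, hsymm 0 3 1,
    hsymm 0 3 2, hsymm 2 1 0, hsymm 2 2 0, hsymm 2 3 0, hsymm 2 2 1, hsymm 2 3 1,
    hsymm 2 3 2]
  linear_combination (-h 2 2 2 - h 2 3 3) * S01 +
    ((-2) * h 0 0 1 + (-2) * h 0 2 3 + 2 * h 2 0 3 + 2 * h 2 1 2) * S02 +
    (h 0 0 0 + h 0 1 1 + 2 * h 0 2 2 + (-2) * h 2 0 2 + 2 * h 2 1 3) * S03 +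
    (h 0 0 0 - h 0 1 1) * S12 + (h 0 0 2 + h 0 1 3) * S23
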